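/- Combined fitness inherits monotonic skipping guarantees: if a place p=(I|O) is classified underfed with respect to L and τ under the combined criterion (meaning it is underfed under at least one of the absolute, relative-restricted, or aggregated underfed criteria whose corresponding monotone implication holds for p'), specifically under the absolute or aggregated criterion, then p'=(I|O') with O ⊆ O' is also underfed under that same criterion, hence unfitting for combined fitness with threshold τ (assuming τ > 0 and the relevant activation multisets are nonempty). -/
import Mathlib


open scoped Classical

variable {A : Type*} [DecidableEq A]

/-- Number of elements of list `l` that belong to `S`. -/
def cnt (S : Finset A) (l : List A) : ℕ :=
  l.countP (fun a => decide (a ∈ S))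

/-- A trace is underfed w.r.t. place `(I|O)` iff at some prefix more tokens are
consumed by `O` than have been produced by `I`. -/
def Underfed (I O : Finset A) (σ : List A) : Prop :=
  ∃ k, 1 ≤ k ∧ k ≤ σ.length ∧ cnt I (σ.take (k - 1)) < cnt O (σ.take k)

/-- A trace is overfed w.r.t. `(I|O)` iff more tokens are produced than consumed overall. -/
def Overfed (I O : Finset A) (σ : List A) : Prop :=
  cnt O σ < cnt I σ

/-- Fitting = neither underfed nor overfed. -/
def Fitting (I O : Finset A) (σ : List A) : Prop :=
  ¬ Underfed I O σ ∧ ¬ Overfed I O σ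

noncomputable def underfedL (L : Multiset (List A)) (I O : Finset A) : Multiset (List A) :=
  L.filter (Underfed I O)

noncomputable def overfedL (L : Multiset (List A)) (I O : Finset A) : Multiset (List A) :=
  L.filter (Overfed I O)

noncomputable def fittingL (L : Multiset (List A)) (I O : Finset A) : Multiset (List A) :=
  L.filter (Fitting I O)

/-- Traces of `L` activated by the activity set `S`. -/
noncomputable def actL (L : Multiset (List A)) (S : Finset A) : Multiset (List A) :=
  L.filter (fun σ => ∃ a ∈ S, a ∈ σ)

/-- Absolute fitness. -/
noncomputable def fAbs (L : Multiset (List A)) (I O : Finset A) : ℝ :=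
  ((fittingL L I O).card : ℝ) / (Multiset.card L : ℝ)

/-- Relative fitness. -/
noncomputable def fRel (L : Multiset (List A)) (I O : Finset A) : ℝ :=
  (((actL L (I ∪ O)) ∩ (fittingL L I O)).card : ℝ) / ((actL L (I ∪ O)).card : ℝ)

/-- Aggregated fitness. -/
noncomputable def fAgg (L : Multiset (List A)) (I O : Finset A) (h : (I ∪ O).Nonempty) : ℝ :=
  (I ∪ O).inf' h (fun a =>
    (((actL L {a}) ∩ (fittingL L I O)).card : ℝ) / ((actL L {a}).card : ℝ))

/-- Absolute-underfed criterion. -/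
noncomputable def AbsUnderfed (L : Multiset (List A)) (I O : Finset A) (τ : ℝ) : Prop :=
  1 - τ < ((underfedL L I O).card : ℝ) / (Multiset.card L : ℝ)

/-- Aggregated-underfed criterion. -/
noncomputable def AggUnderfed (L : Multiset (List A)) (I O : Finset A) (τ : ℝ) : Prop :=
  ∃ a ∈ I ∪ O,
    1 - τ < (((actL L {a}) ∩ underfedL L I O).card : ℝ) / ((actL L {a}).card : ℝ)

/-- Combined fitness: minimum of absolute, relative and aggregated fitness. -/
noncomputable def fComb (L : Multiset (List A)) (I O : Finset A)
    (h : (I ∪ O).Nonempty) : ℝ :=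
  min (min (fAbs L I O) (fRel L I O)) (fAgg L I O h)

private lemma cnt_mono {O O' : Finset A} (h : O ⊆ O') (l : List A) : cnt O l ≤ cnt O' l := by
  apply List.countP_mono_left
  intro a _ ha
  simp only [decide_eq_true_eq] at *
  exact h ha

private lemma underfed_mono {I O O' : Finset A} (h : O ⊆ O') {σ : List A}
    (hu : Underfed I O σ) : Underfed I O' σ := by
  obtain ⟨k, h1, h2, h3⟩ := hu
  exact ⟨k, h1, h2, lt_of_lt_of_le h3 (cnt_mono h _)⟩

private lemma inter_filter {M L : Multiset (List A)} (hM : M ≤ L) (p : List A → Prop)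
    [DecidablePred p] : M ∩ L.filter p = M.filter p := by
  ext a
  rw [Multiset.count_inter, Multiset.count_filter, Multiset.count_filter]
  split
  · exact min_eq_left (Multiset.count_le_of_le a hM)
  · exact min_eq_right (Nat.zero_le _)

private lemma ratio_lemma {τ : ℝ} {m f u : ℕ} (hm : 0 < m) (hfu : f + u ≤ m)
    (h : 1 - τ < (u : ℝ) / m) : (f : ℝ) / m < τ := by
  have hm' : (0 : ℝ) < m := by exact_mod_cast hm
  have h2 : (1 - τ) * m < u := (lt_div_iff₀ hm').mp h
  have h3 : (f : ℝ) + u ≤ m := by exact_mod_cast hfu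
  rw [div_lt_iff₀ hm']
  nlinarith

/-- within a sublog, fitting + underfed cards bounded by total. -/
private lemma filter_cards {M : Multiset (List A)} (I O : Finset A) :
    (M.filter (Fitting I O)).card + (M.filter (Underfed I O)).card ≤ Multiset.card M := by
  have h1 : M.filter (Fitting I O) ≤ M.filter (fun σ => ¬ Underfed I O σ) :=
    Multiset.monotone_filter_right M (fun σ hσ => hσ.1)
  have h2 := Multiset.filter_add_not (Underfed I O) M
  have h3 := Multiset.card_le_card h1
  have h4 : (M.filter (Underfed I O)).card + (M.filter (fun σ => ¬ Underfed I O σ)).card = Multiset.card M := by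
    rw [← Multiset.card_add, h2]
  omega


theorem combined_fitness_skipping (L : Multiset (List A)) (I O O' : Finset A) (τ : ℝ)
    (hτ : 0 < τ) (hτ1 : τ ≤ 1) (hO : O ⊆ O') (hL : L ≠ 0)
    (hne' : (I ∪ O').Nonempty)
    (hact : ∀ a ∈ I ∪ O ∪ O', actL L {a} ≠ 0)
    (hactU : actL L (I ∪ O') ≠ 0) :
    (AbsUnderfed L I O τ → AbsUnderfed L I O' τ) ∧
    (AggUnderfed L I O τ → AggUnderfed L I O' τ) ∧
    ((AbsUnderfed L I O τ ∨ AggUnderfed L I O τ) → fComb L I O' hne' < τ) := by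
  classical
  have hLcard : 0 < Multiset.card L := Multiset.card_pos.mpr hL
  have hLcard' : (0 : ℝ) < (Multiset.card L : ℝ) := by exact_mod_cast hLcard
  have hund : underfedL L I O ≤ underfedL L I O' :=
    Multiset.monotone_filter_right L (fun σ hσ => underfed_mono hO hσ)
  -- part 1
  have p1 : AbsUnderfed L I O τ → AbsUnderfed L I O' τ := by
    intro h
    refine lt_of_lt_of_le h ?_
    have := Multiset.card_le_card hund
    gcongr
  -- part 2
  have p2 : AggUnderfed L I O τ → AggUnderfed L I O' τ := by
    rintro ⟨a, ha, h⟩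
    have ha' : a ∈ I ∪ O' := by
      rcases Finset.mem_union.mp ha with h1 | h1
      · exact Finset.mem_union_left _ h1
      · exact Finset.mem_union_right _ (hO h1)
    refine ⟨a, ha', lt_of_lt_of_le h ?_⟩
    have hMle : actL L {a} ≤ L := Multiset.filter_le _ _
    have e1 : actL L {a} ∩ underfedL L I O = (actL L {a}).filter (Underfed I O) :=
      inter_filter hMle _
    have e2 : actL L {a} ∩ underfedL L I O' = (actL L {a}).filter (Underfed I O') :=
      inter_filter hMle _
    rw [e1, e2]
    have hle : (actL L {a}).filter (Underfed I O) ≤ (actL L {a}).filter (Underfed I O') :=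
      Multiset.monotone_filter_right _ (fun σ hσ => underfed_mono hO hσ)
    have := Multiset.card_le_card hle
    gcongr
  refine ⟨p1, p2, ?_⟩
  -- criteria imply fComb < τ
  rintro (h | h)
  · -- absolute
    have h' := p1 h
    have hfabs : fAbs L I O' < τ := by
      unfold AbsUnderfed at h'
      unfold fAbs
      have hfu := filter_cards (M := L) I O'
      exact ratio_lemma hLcard hfu h'
    calc fComb L I O' hne' ≤ min (fAbs L I O') (fRel L I O') := min_le_left _ _
      _ ≤ fAbs L I O' := min_le_left _ _
      _ < τ := hfabs
  · have h' := p2 h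
    obtain ⟨a, ha, hlt⟩ := h'
    have hMne : actL L {a} ≠ 0 := by
      apply hact
      rcases Finset.mem_union.mp ha with h1 | h1
      · exact Finset.mem_union_left _ (Finset.mem_union_left _ h1)
      · exact Finset.mem_union_right _ h1
    have hMcard : 0 < Multiset.card (actL L {a}) := Multiset.card_pos.mpr hMne
    have hMle : actL L {a} ≤ L := Multiset.filter_le _ _
    have e1 : actL L {a} ∩ underfedL L I O' = (actL L {a}).filter (Underfed I O') :=
      inter_filter hMle _
    have e2 : actL L {a} ∩ fittingL L I O' = (actL L {a}).filter (Fitting I O') :=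
      inter_filter hMle _
    rw [e1] at hlt
    have hratio : (((actL L {a}) ∩ (fittingL L I O')).card : ℝ) / ((actL L {a}).card : ℝ) < τ := by
      rw [e2]
      exact ratio_lemma hMcard (filter_cards (M := actL L {a}) I O') hlt
    have hagg : fAgg L I O' hne' < τ := by
      refine lt_of_le_of_lt (Finset.inf'_le _ ha) hratio
    exact lt_of_le_of_lt (min_le_right _ _) hagg
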